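/- arXiv:1610.05294 — 3 statements merged into one kernel-verified Lean document; each statement's English description precedes it below -/
import Mathlib

section
/- Let (X, 𝔅, μ) be a probability space, T : X → X a measurable map preserving μ, and φ : X → ℝ a μ-integrable function such that the Birkhoff sums S_n φ(x) = Σ_{j=0}^{n-1} φ(T^j x) tend to +∞ as n → ∞ for μ-almost every x. Then ∫ φ dμ > 0. -/
/-!
Let `M x = ⨅ n, S_n φ x`, the minimum of the Birkhoff sums (including `S_0 φ = 0`). Since
`S_{n+1} φ = φ + S_n φ ∘ T`, we get `M ≤ φ + M ∘ T`, i.e. `φ = g + (M - M ∘ T)` with `g ≥ 0`.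
A coboundary `M ∘ T - M` bounded below by an integrable function is integrable with integral
zero: truncating `M` at level `K` gives bounded coboundaries of integral zero, and Fatou's lemma
and dominated convergence pass to the limit `K → ∞`. Hence `∫ φ = ∫ g`. Finally `g > 0` at every
point all of whose Birkhoff sums `S_n φ`, `n ≥ 1`, are positive; almost every orbit meets this
set (at the last time `k` with `S_k φ x ≤ 0`), so by invariance of `μ` the set has positive
measure, and `∫ g > 0`.
-/

open MeasureTheory Filter Topology Set

theorem clamp_sub_clamp_mem_uIcc (K a b : ℝ) :
    max (-K) (min K a) - max (-K) (min K b) ∈ uIcc 0 (a - b) := by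
  rw [mem_uIcc]
  grind

theorem eventually_clamp_eq (t : ℝ) : ∀ᶠ K : ℕ in atTop, max (-(K : ℝ)) (min K t) = t := by
  filter_upwards [eventually_ge_atTop ⌈|t|⌉₊] with K hK
  have : |t| ≤ K := (Nat.le_ceil _).trans (by exact_mod_cast hK)
  rw [min_eq_right (le_of_abs_le this), max_eq_right (neg_le_of_abs_le this)]

namespace MeasureTheory

variable {X : Type*} [MeasurableSpace X] {μ : Measure X}

theorem integrable_of_tendsto_of_integral_le {f : ℕ → X → ℝ} {F h : X → ℝ} {C : ℝ}
    (hf : ∀ n, Integrable (f n) μ) (hh : Integrable h μ) (hfh : ∀ n, ∀ᵐ x ∂μ, -h x ≤ f n x)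
    (hfC : ∀ n, ∫ x, f n x ∂μ ≤ C)
    (hlim : ∀ᵐ x ∂μ, Tendsto (fun n => f n x) atTop (𝓝 (F x))) :
    Integrable F μ := by
  have hFh_nonneg : 0 ≤ᵐ[μ] F + h := by
    filter_upwards [hlim, ae_all_iff.2 hfh] with x hx hxh
    exact ge_of_tendsto' (hx.add_const (h x)) fun n => by
      simp only [Pi.zero_apply]; linarith [hxh n]
  have hfh_bound : ∀ n,
      ∫⁻ x, ENNReal.ofReal ((f n + h) x) ∂μ ≤ ENNReal.ofReal (C + ∫ x, h x ∂μ) := by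
    intro n
    rw [← ofReal_integral_eq_lintegral_ofReal ((hf n).add hh)
      ((hfh n).mono fun x hx => by simp only [Pi.zero_apply, Pi.add_apply]; linarith),
      integral_add' (hf n) hh]
    exact ENNReal.ofReal_le_ofReal (by linarith [hfC n])
  have hFh : Integrable (F + h) μ := by
    refine ⟨(aestronglyMeasurable_of_tendsto_ae atTop (fun n => (hf n).1) hlim).add hh.1,
      (hasFiniteIntegral_iff_ofReal hFh_nonneg).2 ?_⟩
    calc ∫⁻ x, ENNReal.ofReal ((F + h) x) ∂μ
        = ∫⁻ x, liminf (fun n => ENNReal.ofReal ((f n + h) x)) atTop ∂μ := by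
          refine lintegral_congr_ae (hlim.mono fun x hx => ?_)
          exact ((ENNReal.continuous_ofReal.tendsto _).comp (hx.add_const (h x))).liminf_eq.symm
      _ ≤ liminf (fun n => ∫⁻ x, ENNReal.ofReal ((f n + h) x) ∂μ) atTop :=
          lintegral_liminf_le' fun n => ((hf n).add hh).aemeasurable.ennreal_ofReal
      _ ≤ ENNReal.ofReal (C + ∫ x, h x ∂μ) :=
          (liminf_le_liminf (Eventually.of_forall hfh_bound)).trans_eq (liminf_const _)
      _ < ⊤ := ENNReal.ofReal_lt_top
  simpa using hFh.sub hh

namespace MeasurePreserving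

theorem integral_comp_eq {Y E : Type*} [MeasurableSpace Y] [NormedAddCommGroup E]
    [NormedSpace ℝ E] {ν : Measure Y} {T : X → Y} (hT : MeasurePreserving T μ ν) {g : Y → E}
    (hg : AEStronglyMeasurable g ν) : ∫ x, g (T x) ∂μ = ∫ y, g y ∂ν := by
  rw [← integral_map hT.aemeasurable (hT.map_eq ▸ hg), hT.map_eq]

theorem integrable_comp_sub_and_integral_eq_zero [IsFiniteMeasure μ] {T : X → X}
    (hT : MeasurePreserving T μ μ) {u f : X → ℝ} (hu : AEStronglyMeasurable u μ)
    (hf : Integrable f μ) (hle : ∀ᵐ x ∂μ, -f x ≤ u (T x) - u x) :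
    Integrable (fun x => u (T x) - u x) μ ∧ ∫ x, u (T x) - u x ∂μ = 0 := by
  set c : ℕ → ℝ → ℝ := fun K t => max (-(K : ℝ)) (min K t)
  set w : ℕ → X → ℝ := fun K x => c K (u (T x)) - c K (u x)
  have hc_int : ∀ K, Integrable (fun x => c K (u x)) μ := fun K =>
    .of_bound ((by fun_prop : Continuous (c K)).comp_aestronglyMeasurable hu) K
      (ae_of_all _ fun x => abs_le.2 ⟨le_max_left _ _, max_le (by simp) (min_le_left _ _)⟩)
  have hw_int : ∀ K, Integrable (w K) μ := fun K =>
    (hT.integrable_comp_of_integrable (hc_int K)).sub (hc_int K)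
  have hw_zero : ∀ K, ∫ x, w K x ∂μ = 0 := fun K => by
    rw [integral_sub (f := fun x => c K (u (T x))) (hT.integrable_comp_of_integrable (hc_int K))
      (hc_int K), hT.integral_comp_eq (hc_int K).1, sub_self]
  have hw_lim : ∀ x, Tendsto (fun K => w K x) atTop (𝓝 (u (T x) - u x)) := fun x =>
    tendsto_const_nhds.congr' <|
      (eventually_clamp_eq (u (T x))).mp <| (eventually_clamp_eq (u x)).mono fun K h₁ h₂ => by
        simp only [w, c, h₁, h₂]
  have hw_mem := fun (K : ℕ) x => clamp_sub_clamp_mem_uIcc K (u (T x)) (u x)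
  have hint : Integrable (fun x => u (T x) - u x) μ := by
    refine integrable_of_tendsto_of_integral_le hw_int hf.abs (fun K => ?_)
      (fun K => (hw_zero K).le) (ae_of_all _ hw_lim)
    filter_upwards [hle] with x hx
    have hw_ge := (hw_mem K x).1
    have hf_ge := neg_abs_le (f x)
    grind
  refine ⟨hint, tendsto_nhds_unique (tendsto_integral_of_dominated_convergence _
    (fun K => (hw_int K).1) hint.abs (fun K => ae_of_all _ fun x => ?_) (ae_of_all _ hw_lim)) ?_⟩
  · have hw_mem := hw_mem K x
    rw [Real.norm_eq_abs, abs_le]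
    grind
  · simpa only [hw_zero] using tendsto_const_nhds

end MeasurePreserving

end MeasureTheory

section BirkhoffSum

variable {X : Type*} {T : X → X} {φ : X → ℝ} {x : X}

theorem tendsto_birkhoffSum_apply_map
    (hx : Tendsto (birkhoffSum T φ · x) atTop atTop) :
    Tendsto (birkhoffSum T φ · (T x)) atTop atTop := by
  simpa [birkhoffSum_succ'] using
    tendsto_atTop_add_const_left _ (-φ x) ((tendsto_add_atTop_iff_nat 1).2 hx)

theorem exists_birkhoffSum_eq_iInf (hx : Tendsto (birkhoffSum T φ · x) atTop atTop) :
    ∃ n, birkhoffSum T φ n x = ⨅ m, birkhoffSum T φ m x := by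
  obtain ⟨n, hn⟩ := (Nat.cofinite_eq_atTop ▸ hx).exists_forall_le
  exact ⟨n, le_antisymm (le_ciInf hn) (ciInf_le ⟨_, forall_mem_range.2 hn⟩ n)⟩

theorem iInf_birkhoffSum_le_add (hx : Tendsto (birkhoffSum T φ · x) atTop atTop) :
    ⨅ n, birkhoffSum T φ n x ≤ φ x + ⨅ n, birkhoffSum T φ n (T x) := by
  rw [← sub_le_iff_le_add']
  refine le_ciInf fun n => ?_
  rw [sub_le_iff_le_add', ← birkhoffSum_succ']
  exact ciInf_le (bddBelow_range_of_tendsto_atTop_atTop hx) (n + 1)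

theorem iInf_birkhoffSum_lt_add (hpos : ∀ n, 0 < birkhoffSum T φ (n + 1) x)
    (hTx : Tendsto (birkhoffSum T φ · (T x)) atTop atTop) :
    ⨅ n, birkhoffSum T φ n x < φ x + ⨅ n, birkhoffSum T φ n (T x) := by
  obtain ⟨n, hn⟩ := exists_birkhoffSum_eq_iInf hTx
  have hbdd : BddBelow (range (birkhoffSum T φ · x)) := by
    refine ⟨0, forall_mem_range.2 fun m => ?_⟩
    cases m with
    | zero => simp
    | succ m => exact (hpos m).le
  calc ⨅ m, birkhoffSum T φ m x ≤ birkhoffSum T φ 0 x := ciInf_le hbdd 0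
    _ = 0 := birkhoffSum_zero _ _ _
    _ < φ x + ⨅ n, birkhoffSum T φ n (T x) := by rw [← hn, ← birkhoffSum_succ']; exact hpos n

theorem exists_forall_birkhoffSum_iterate_pos (hx : Tendsto (birkhoffSum T φ · x) atTop atTop) :
    ∃ k, ∀ n, 0 < birkhoffSum T φ (n + 1) (T^[k] x) := by
  obtain ⟨N, hN⟩ := eventually_atTop.1 (hx.eventually_gt_atTop 0)
  set P : ℕ → Prop := fun m => birkhoffSum T φ m x ≤ 0
  set k := Nat.findGreatest P N
  have hk : P k := Nat.findGreatest_spec (Nat.zero_le N) (birkhoffSum_zero T φ x).le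
  refine ⟨k, fun n => ?_⟩
  have hlt : 0 < birkhoffSum T φ (k + (n + 1)) x := by
    by_contra! hle
    have hkn : k + (n + 1) ≤ N := by
      by_contra! h
      exact hle.not_gt (hN _ h.le)
    exact Nat.findGreatest_is_greatest (P := P) (by omega) hkn hle
  rw [birkhoffSum_add] at hlt
  linarith

end BirkhoffSum

theorem MeasureTheory.Measure.QuasiMeasurePreserving.measure_pos_setOf_forall_birkhoffSum_pos
    {X : Type*} [MeasurableSpace X] {μ : Measure X} [NeZero μ] {T : X → X} {φ : X → ℝ}
    (hT : QuasiMeasurePreserving T μ μ)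
    (h : ∀ᵐ x ∂μ, Tendsto (birkhoffSum T φ · x) atTop atTop) :
    0 < μ {x | ∀ n, 0 < birkhoffSum T φ (n + 1) x} := by
  refine pos_iff_ne_zero.2 fun hA => NeZero.ne μ (ae_eq_bot.1 (eventually_false_iff_eq_bot.1 ?_))
  have hnever : ∀ᵐ x ∂μ, ∀ k, T^[k] x ∉ {x | ∀ n, 0 < birkhoffSum T φ (n + 1) x} :=
    ae_all_iff.2 fun k => (hT.iterate k).ae (measure_eq_zero_iff_ae_notMem.1 hA)
  filter_upwards [h, hnever] with x hx hx_never
  obtain ⟨k, hk⟩ := exists_forall_birkhoffSum_iterate_pos hx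
  exact hx_never k hk

/-- If `T` preserves a probability measure `μ`, `φ` is integrable and the Birkhoff sums
`∑_{j<n} φ(T^j x)` tend to `+∞` for `μ`-almost every `x`, then `∫ φ dμ > 0`. -/
theorem stmt_1 {X : Type*} [MeasurableSpace X] (μ : Measure X) [IsProbabilityMeasure μ]
    (T : X → X) (hT : MeasurePreserving T μ μ)
    (φ : X → ℝ) (hφ : Integrable φ μ)
    (h : ∀ᵐ x ∂μ, Tendsto (fun n => ∑ j ∈ Finset.range n, φ (T^[j] x)) atTop atTop) :
    0 < ∫ x, φ x ∂μ := by
  change ∀ᵐ x ∂μ, Tendsto (birkhoffSum T φ · x) atTop atTop at h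
  -- Junk value `0` where the sums are unbounded below, a null set.
  set M : X → ℝ := fun x => ⨅ n, birkhoffSum T φ n x
  have hM : AEStronglyMeasurable M μ := (AEMeasurable.iInf fun n =>
    (Finset.aestronglyMeasurable_fun_sum _ fun k _ =>
      hφ.1.comp_measurePreserving (hT.iterate k)).aemeasurable).aestronglyMeasurable
  have hM_le : ∀ᵐ x ∂μ, M x ≤ φ x + M (T x) := h.mono fun x hx => iInf_birkhoffSum_le_add hx
  obtain ⟨hw_int, hw_zero⟩ := hT.integrable_comp_sub_and_integral_eq_zero hM hφ
    (hM_le.mono fun x hx => by linarith)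
  set g : X → ℝ := fun x => φ x + (M (T x) - M x)
  have hg_nonneg : 0 ≤ᵐ[μ] g := hM_le.mono fun x hx => by simp only [g, Pi.zero_apply]; linarith
  have hg_pos : {x | ∀ n, 0 < birkhoffSum T φ (n + 1) x} ≤ᵐ[μ] Function.support g := by
    filter_upwards [h] with x hx hxA
    have hlt := iInf_birkhoffSum_lt_add hxA (tendsto_birkhoffSum_apply_map hx)
    exact (show 0 < g x by simp only [g, M]; linarith).ne'
  calc 0 < ∫ x, g x ∂μ := (integral_pos_iff_support_of_nonneg_ae hg_nonneg (hφ.add hw_int)).2 <|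
        (hT.quasiMeasurePreserving.measure_pos_setOf_forall_birkhoffSum_pos h).trans_le
          (measure_mono_ae hg_pos)
    _ = ∫ x, φ x ∂μ := by rw [integral_add hφ hw_int, hw_zero, add_zero]
end

section
/- Let M be a normal topological space with a regular σ-finite Borel measure μ, N a geodesically convex metric space with base point 0̂, and s : M → N a simple map. Then for every ε > 0 there exists a continuous map f : M → N with ∫ dist_N(f(x),s(x)) dμ(x) ≤ ε. -/
/-!
Approximate each piece `A i` of the simple map from inside by a closed set `F i` and from outside
by an open set `V i`, up to small measure; this uses outer regularity, and σ-finiteness to reach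
the closed sets. Normality separates the disjoint closed sets `F i` by disjoint open sets
`U i ⊆ V i`, and a Urysohn function on `U i`, composed with a path from the base point to the
value on `A i`, is a continuous bump equal to that value on `F i` and to the base point off `U i`.
These bumps glue to a continuous map that agrees with the simple map off `⋃ i, V i \ F i`, and
it is uniformly close to it because both take values in the bounded set of points on the paths.
-/

open MeasureTheory Set

/-- A simple map: takes finitely many values `v i` on pairwise disjoint measurable sets
`A i` of finite measure and equals the base point `o` elsewhere. -/
def IsSimpleMapTo {M N : Type*} [MeasurableSpace M] (μ : Measure M)
    (o : N) (s : M → N) : Prop :=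
  ∃ (k : ℕ) (v : Fin k → N) (A : Fin k → Set M),
    (∀ i, MeasurableSet (A i)) ∧
    (Pairwise fun i j => Disjoint (A i) (A j)) ∧
    (∀ i, μ (A i) < ⊤) ∧
    (∀ i, ∀ x ∈ A i, s x = v i) ∧
    (∀ x, x ∉ ⋃ i, A i → s x = o)

open Function
open scoped ENNReal

theorem MeasurableSet.exists_isClosed_sdiff_le_of_sigmaFinite {X : Type*} [TopologicalSpace X]
    [MeasurableSpace X] [OpensMeasurableSpace X] {μ : Measure X} [SigmaFinite μ]
    [μ.OuterRegular] {A : Set X} (hA : MeasurableSet A) {ε : ℝ≥0∞} (hε : ε ≠ 0) :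
    ∃ F, F ⊆ A ∧ IsClosed F ∧ μ (A \ F) ≤ ε := by
  obtain ⟨δ, hδ, hδε⟩ := ENNReal.exists_pos_sum_of_countable' hε ℕ
  -- cover `Aᶜ` by open sets approximating its finite-measure pieces `Aᶜ ∩ spanningSets μ n`
  choose W hW hWo _ hWδ using fun n =>
    (hA.compl.inter (measurableSet_spanningSets μ n)).exists_isOpen_sdiff_lt
      (measure_inter_lt_top_of_right_ne_top (measure_spanningSets_lt_top μ n).ne).ne
      (hδ n).ne'
  have hAW : Aᶜ ⊆ ⋃ n, W n := fun x hx =>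
    mem_iUnion.2 ⟨spanningSetsIndex μ x, hW _ ⟨hx, mem_spanningSetsIndex μ x⟩⟩
  refine ⟨(⋃ n, W n)ᶜ, compl_subset_comm.1 hAW, (isOpen_iUnion hWo).isClosed_compl, ?_⟩
  calc μ (A \ (⋃ n, W n)ᶜ) ≤ μ (⋃ n, W n \ (Aᶜ ∩ spanningSets μ n)) :=
        measure_mono fun x ⟨hxA, hxW⟩ => by
          obtain ⟨n, hn⟩ := mem_iUnion.1 (not_not.1 hxW)
          exact mem_iUnion.2 ⟨n, hn, fun h => h.1 hxA⟩
    _ ≤ ∑' n, δ n := (measure_iUnion_le _).trans (ENNReal.tsum_le_tsum fun n => (hWδ n).le)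
    _ ≤ ε := hδε.le

theorem MeasurableSet.exists_isClosed_isOpen_sdiff_le {X : Type*} [TopologicalSpace X]
    [MeasurableSpace X] [OpensMeasurableSpace X] {μ : Measure X} [SigmaFinite μ]
    [μ.OuterRegular] {A : Set X} (hA : MeasurableSet A) (hμA : μ A ≠ ∞) {ε : ℝ≥0∞}
    (hε : ε ≠ 0) :
    ∃ F V, F ⊆ A ∧ A ⊆ V ∧ IsClosed F ∧ IsOpen V ∧ μ (V \ F) ≤ ε := by
  obtain ⟨F, hFA, hF, hAF⟩ :=
    hA.exists_isClosed_sdiff_le_of_sigmaFinite (μ := μ) (ENNReal.half_pos hε).ne'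
  obtain ⟨V, hAV, hV, -, hVA⟩ := hA.exists_isOpen_sdiff_lt hμA (ENNReal.half_pos hε).ne'
  refine ⟨F, V, hFA, hAV, hF, hV, ?_⟩
  calc μ (V \ F) ≤ μ (V \ A) + μ (A \ F) :=
        (measure_mono (sdiff_triangle V A F)).trans (measure_union_le _ _)
    _ ≤ ε / 2 + ε / 2 := add_le_add hVA.le hAF
    _ = ε := ENNReal.add_halves ε

theorem exists_isOpen_pairwise_disjoint_between {X ι : Type*} [TopologicalSpace X]
    [NormalSpace X] [Finite ι] {F V : ι → Set X} (hF : ∀ i, IsClosed (F i))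
    (hFd : Pairwise (Disjoint on F)) (hV : ∀ i, IsOpen (V i)) (hFV : ∀ i, F i ⊆ V i) :
    ∃ U : ι → Set X, (∀ i, IsOpen (U i)) ∧ Pairwise (Disjoint on U) ∧
      (∀ i, F i ⊆ U i) ∧ ∀ i, U i ⊆ V i := by
  choose P Q hP hQ hFP hFQ hPQ using fun i =>
    NormalSpace.normal (F i) (⋃ (j) (_ : j ≠ i), F j) (hF i)
      (isClosed_iUnion_of_finite fun j => isClosed_iUnion_of_finite fun _ => hF j)
      (disjoint_iUnion₂_right.2 fun j hji => hFd hji.symm)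
  refine ⟨fun i => V i ∩ P i ∩ ⋂ (j) (_ : j ≠ i), Q j,
    fun i => ((hV i).inter (hP i)).inter
      (isOpen_iInter_of_finite fun j => isOpen_iInter_of_finite fun _ => hQ j),
    fun i j hij => (hPQ j).symm.mono (fun x hx => mem_iInter₂.1 hx.2 j hij.symm)
      (fun x hx => hx.1.2),
    fun i x hx => ⟨⟨hFV i hx, hFP i hx⟩, mem_iInter₂.2 fun j hji => hFQ j
      (mem_iUnion₂.2 ⟨i, hji.symm, hx⟩)⟩,
    fun i => inter_subset_left.trans inter_subset_left⟩

theorem exists_continuous_eqOn_path_endpoints {X Y : Type*} [TopologicalSpace X] [NormalSpace X]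
    [TopologicalSpace Y] {F U : Set X} (hF : IsClosed F) (hU : IsOpen U) (hFU : F ⊆ U)
    {γ : ℝ → Y} (hγ : ContinuousOn γ (Icc 0 1)) :
    ∃ g : X → Y, Continuous g ∧ EqOn g (fun _ => γ 1) F ∧ EqOn g (fun _ => γ 0) Uᶜ ∧
      ∀ x, g x ∈ γ '' Icc 0 1 := by
  obtain ⟨φ, hφ0, hφ1, hφ⟩ := exists_continuous_zero_one_of_isClosed hU.isClosed_compl hF
    (disjoint_compl_left_iff_subset.2 hFU)
  refine ⟨γ ∘ φ, hγ.comp_continuous φ.continuous hφ, fun x hx => ?_, fun x hx => ?_,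
    fun x => mem_image_of_mem γ (hφ x)⟩
  · simp [hφ1 hx]
  · simp [hφ0 hx]

theorem exists_continuous_glue {X Y ι : Type*} [TopologicalSpace X] [TopologicalSpace Y]
    [Finite ι] {U : ι → Set X} (hU : ∀ i, IsOpen (U i)) (hUd : Pairwise (Disjoint on U))
    (o : Y) {g : ι → X → Y} (hg : ∀ i, Continuous (g i))
    (hgo : ∀ i, EqOn (g i) (fun _ => o) (U i)ᶜ) :
    ∃ f : X → Y, Continuous f ∧ (∀ i, EqOn f (g i) (U i)) ∧
      EqOn f (fun _ => o) (⋃ i, U i)ᶜ := by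
  classical
  let f : X → Y := fun x => if h : ∃ i, x ∈ U i then g h.choose x else o
  have hfU : ∀ i, EqOn f (g i) (U i) := fun i x hx => by
    have h : ∃ j, x ∈ U j := ⟨i, hx⟩
    have : h.choose = i := by_contra fun hne => (hUd hne).ne_of_mem h.choose_spec hx rfl
    simp only [f, dif_pos h, this]
  have hfo : EqOn f (fun _ => o) (⋃ i, U i)ᶜ := fun x hx =>
    dif_neg fun h => hx (mem_iUnion.2 h)
  refine ⟨f, continuous_iff_continuousAt.2 fun x => ?_, hfU, hfo⟩
  by_cases hx : x ∈ ⋃ i, U i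
  · obtain ⟨i, hxi⟩ := mem_iUnion.1 hx
    exact (hg i).continuousAt.congr
      (Filter.eventuallyEq_of_mem ((hU i).mem_nhds hxi) fun y hy => (hfU i hy).symm)
  · -- off `⋃ i, U i` every `g i` is near `o`, and `f` takes only the values `o` and `g i y`
    refine fun W hW => Filter.mem_map.2 ?_
    rw [hfo hx] at hW
    have hg' : ∀ᶠ y in nhds x, ∀ i, g i y ∈ W := Filter.eventually_all.2 fun i =>
      (hg i).continuousAt.preimage_mem_nhds (by rwa [hgo i fun h => hx (mem_iUnion.2 ⟨i, h⟩)])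
    filter_upwards [hg'] with y hy
    by_cases hyU : y ∈ ⋃ i, U i
    · obtain ⟨i, hyi⟩ := mem_iUnion.1 hyU
      simpa [hfU i hyi] using hy i
    · simpa [hfo hyU] using mem_of_mem_nhds hW

theorem exists_continuous_eqOn_of_paths {X Y ι : Type*} [TopologicalSpace X] [NormalSpace X]
    [TopologicalSpace Y] [Finite ι] (o : Y) {γ : ι → ℝ → Y}
    (hγ : ∀ i, ContinuousOn (γ i) (Icc 0 1)) (hγ0 : ∀ i, γ i 0 = o) {F V : ι → Set X}
    (hF : ∀ i, IsClosed (F i)) (hFd : Pairwise (Disjoint on F)) (hV : ∀ i, IsOpen (V i))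
    (hFV : ∀ i, F i ⊆ V i) :
    ∃ f : X → Y, Continuous f ∧ (∀ i, EqOn f (fun _ => γ i 1) (F i)) ∧
      EqOn f (fun _ => o) (⋃ i, V i)ᶜ ∧ range f ⊆ insert o (⋃ i, γ i '' Icc 0 1) := by
  obtain ⟨U, hU, hUd, hFU, hUV⟩ := exists_isOpen_pairwise_disjoint_between hF hFd hV hFV
  choose g hg hgF hgU hgγ using fun i =>
    exists_continuous_eqOn_path_endpoints (hF i) (hU i) (hFU i) (hγ i)
  obtain ⟨f, hf, hfU, hfo⟩ := exists_continuous_glue hU hUd o hg fun i => by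
    simpa only [hγ0] using hgU i
  refine ⟨f, hf, fun i x hx => (hfU i (hFU i hx)).trans (hgF i hx),
    fun x hx => hfo (compl_subset_compl.2 (iUnion_mono hUV) hx), ?_⟩
  rintro _ ⟨x, rfl⟩
  by_cases hx : x ∈ ⋃ i, U i
  · obtain ⟨i, hi⟩ := mem_iUnion.1 hx
    exact mem_insert_of_mem _ (mem_iUnion.2 ⟨i, hfU i hi ▸ hgγ i x⟩)
  · exact hfo hx ▸ mem_insert o _

theorem eqOn_compl_iUnion_sdiff {X Y ι : Type*} {f s : X → Y} {o : Y} {v : ι → Y}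
    {F A V : ι → Set X} (hFA : ∀ i, F i ⊆ A i) (hAV : ∀ i, A i ⊆ V i)
    (hsA : ∀ i, ∀ x ∈ A i, s x = v i) (hso : ∀ x, x ∉ ⋃ i, A i → s x = o)
    (hfF : ∀ i, EqOn f (fun _ => v i) (F i)) (hfV : EqOn f (fun _ => o) (⋃ i, V i)ᶜ) :
    EqOn f s (⋃ i, V i \ F i)ᶜ := by
  intro x hx
  simp only [mem_compl_iff, mem_iUnion, mem_sdiff, not_exists, not_and, not_not] at hx
  by_cases hxF : ∃ i, x ∈ F i
  · obtain ⟨i, hi⟩ := hxF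
    rw [hfF i hi, hsA i x (hFA i hi)]
  · push Not at hxF
    have hxV : ∀ i, x ∉ V i := fun i hi => hxF i (hx i hi)
    rw [hfV (by simpa using hxV), hso x (by simpa using fun i hi => hxV i (hAV i hi))]

theorem lintegral_ofReal_dist_le_mul_measure {X Y : Type*} [MeasurableSpace X]
    [PseudoMetricSpace Y] (μ : Measure X) {f g : X → Y} {C : ℝ} {B : Set X}
    (hC : ∀ x, dist (f x) (g x) ≤ C) (hfg : EqOn f g Bᶜ) :
    ∫⁻ x, ENNReal.ofReal (dist (f x) (g x)) ∂μ ≤ ENNReal.ofReal C * μ B :=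
  calc ∫⁻ x, ENNReal.ofReal (dist (f x) (g x)) ∂μ
      ≤ ∫⁻ x, B.indicator (fun _ => ENNReal.ofReal C) x ∂μ := lintegral_mono fun x => by
        by_cases hx : x ∈ B
        · simpa [hx] using ENNReal.ofReal_le_ofReal (hC x)
        · simp [hx, hfg hx]
    _ ≤ ENNReal.ofReal C * μ B := lintegral_indicator_const_le B _

/-- Any simple map `s : M → N`, with `M` a normal topological space with a regular σ-finite
Borel measure and `N` a geodesically convex metric space with base point `o`, is approximated
in `L¹` by continuous maps: for every `ε > 0` there is a continuous `f : M → N` with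
`∫ dist(f x, s x) dμ ≤ ε`. -/
theorem stmt_4 {M N : Type*} [TopologicalSpace M] [NormalSpace M]
    [MeasurableSpace M] [BorelSpace M]
    (μ : Measure M) [SigmaFinite μ] [μ.Regular]
    [MetricSpace N] (o : N)
    (hconv : ∃ τ : ℝ, 1 ≤ τ ∧ ∀ u v : N, ∃ γ : ℝ → N,
      ContinuousOn γ (Icc 0 1) ∧ γ 0 = u ∧ γ 1 = v ∧
      ∀ s' ∈ Icc (0:ℝ) 1, ∀ t ∈ Icc (0:ℝ) 1, dist (γ s') (γ t) ≤ τ * dist u v)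
    (s : M → N) (hs : IsSimpleMapTo μ o s)
    (ε : ℝ) (hε : 0 < ε) :
    ∃ f : M → N, Continuous f ∧
      ∫⁻ x, ENNReal.ofReal (dist (f x) (s x)) ∂μ ≤ ENNReal.ofReal ε := by
  obtain ⟨_, -, hpath⟩ := hconv
  obtain ⟨k, v, A, hAm, hAd, hAμ, hsA, hso⟩ := hs
  choose γ hγ hγ0 hγ1 _ using fun i => hpath o (v i)
  obtain ⟨C, hC⟩ := Metric.isBounded_iff.1 <| (Bornology.isBounded_iUnion.2 fun i =>
    (isCompact_Icc.image_of_continuousOn (hγ i)).isBounded).insert o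
  obtain ⟨δ, hδ, hδε⟩ := ENNReal.exists_pos_mul_lt (a := k * ENNReal.ofReal C) (by finiteness)
    (ENNReal.ofReal_pos.2 hε).ne'
  choose F V hFA hAV hF hV hVF using fun i =>
    (hAm i).exists_isClosed_isOpen_sdiff_le (μ := μ) (hAμ i).ne hδ.ne'
  obtain ⟨f, hf, hfF, hfV, hfγ⟩ := exists_continuous_eqOn_of_paths o hγ hγ0 hF
    (fun i j hij => (hAd hij).mono (hFA i) (hFA j)) hV fun i => (hFA i).trans (hAV i)
  have hsγ : ∀ x, s x ∈ insert o (⋃ i, γ i '' Icc 0 1) := fun x => by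
    by_cases hx : x ∈ ⋃ i, A i
    · obtain ⟨i, hi⟩ := mem_iUnion.1 hx
      exact mem_insert_of_mem _ (mem_iUnion.2 ⟨i, 1, right_mem_Icc.2 zero_le_one,
        by rw [hγ1, hsA i x hi]⟩)
    · rw [hso x hx]; exact mem_insert o _
  refine ⟨f, hf, ?_⟩
  calc ∫⁻ x, ENNReal.ofReal (dist (f x) (s x)) ∂μ
      ≤ ENNReal.ofReal C * μ (⋃ i, V i \ F i) :=
        lintegral_ofReal_dist_le_mul_measure μ (fun x => hC (hfγ (mem_range_self x)) (hsγ x))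
          (eqOn_compl_iUnion_sdiff hFA hAV hsA hso (by simpa only [hγ1] using hfF) hfV)
    _ ≤ ENNReal.ofReal C * (k * δ) := by
        gcongr
        calc μ (⋃ i, V i \ F i) ≤ ∑ i, μ (V i \ F i) := measure_iUnion_fintype_le μ _
          _ ≤ k * δ := by simpa using Finset.sum_le_card_nsmul Finset.univ _ δ fun i _ => hVF i
    _ = δ * (k * ENNReal.ofReal C) := by ring
    _ ≤ ENNReal.ofReal ε := hδε.le
end

section
/- Let (N, 𝔅, η) be a Lebesgue probability space, g : N → N a measurable map preserving η, and {η_y : y ∈ N} the disintegration of η with respect to the partition into preimages {g^{-1}(y) : y ∈ N}. Let G(x,v) = (g(x), G_x(v)) be a measurable skew product on N × L and m a probability on N × L projecting to η with fiber disintegration {m_x}. Then m is G-invariant if and only if m_x = ∫ (G_z)_* m_z dη_x(z) for η-almost every x ∈ N. -/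
open MeasureTheory ProbabilityTheory
open scoped ENNReal

/-!
Write `m = η ⊗ₘ m_x`. The skew product acts in two steps: the fibre maps push `m_x` to
`(G_x)_* m_x`, and then the base point moves by `g`. Because `κ` disintegrates `η` over `g`,
i.e. `(g z, z)_* η = η ⊗ₘ κ`, moving the base point by `g` averages the fibres over `κ`, so
`G_* m = η ⊗ₘ ν` with `ν_x = ∫ (G_z)_* m_z dκ_x(z)`. By uniqueness of disintegrations,
`η ⊗ₘ ν = η ⊗ₘ m_x` holds if and only if `ν = m_x` for `η`-almost every `x`.
-/

section Disintegration

variable {N : Type*} [MeasurableSpace N] {η : Measure N} {g : N → N} {κ : Kernel N N}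

lemma apply_preimage_inter_eq_indicator_of_ae_eq {y : N} (h : ∀ᵐ z ∂κ y, g z = y)
    (A B : Set N) : κ y (g ⁻¹' A ∩ B) = A.indicator (fun y => κ y B) y := by
  by_cases hy : y ∈ A
  · rw [Set.indicator_of_mem hy]
    refine measure_congr (Filter.eventuallyEq_set.2 ?_)
    filter_upwards [h] with z hz
    simp [hz, hy]
  · rw [Set.indicator_of_notMem hy]
    refine measure_mono_null Set.inter_subset_left (measure_eq_zero_iff_ae_notMem.2 ?_)
    filter_upwards [h] with z hz
    simp [hz, hy]

lemma map_graph_eq_compProd [IsFiniteMeasure η] [IsSFiniteKernel κ]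
    (hpres : MeasurePreserving g η η) (hsupp : ∀ y, ∀ᵐ z ∂κ y, g z = y)
    (hdis : ∀ φ : N → ℝ≥0∞, Measurable φ → ∫⁻ z, φ z ∂η = ∫⁻ x, ∫⁻ z, φ z ∂κ (g x) ∂η) :
    η.map (fun z => (g z, z)) = η ⊗ₘ κ := by
  have hg := hpres.measurable
  refine Measure.ext_prod fun {A B} hA hB => ?_
  have hAB : MeasurableSet (g ⁻¹' A ∩ B) := (hg hA).inter hB
  calc η.map (fun z => (g z, z)) (A ×ˢ B)
      = η (g ⁻¹' A ∩ B) := by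
        rw [Measure.map_apply (f := fun z => (g z, z)) (hg.prodMk measurable_id) (hA.prod hB)]
        rfl
    _ = ∫⁻ x, κ (g x) (g ⁻¹' A ∩ B) ∂η := by
        simpa [lintegral_indicator_one hAB] using hdis _ (measurable_one.indicator hAB)
    _ = ∫⁻ x, A.indicator (fun y => κ y B) (g x) ∂η := by
        simp_rw [apply_preimage_inter_eq_indicator_of_ae_eq (hsupp _)]
    _ = ∫⁻ y in A, κ y B ∂η := by
        rw [hpres.lintegral_comp ((κ.measurable_coe hB).indicator hA), lintegral_indicator hA]
    _ = (η ⊗ₘ κ) (A ×ˢ B) := (Measure.compProd_apply_prod hA hB).symm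

lemma map_prodMap_compProd {L : Type*} [MeasurableSpace L] [IsFiniteMeasure η]
    [IsSFiniteKernel κ] (hpres : MeasurePreserving g η η) (hsupp : ∀ y, ∀ᵐ z ∂κ y, g z = y)
    (hdis : ∀ φ : N → ℝ≥0∞, Measurable φ → ∫⁻ z, φ z ∂η = ∫⁻ x, ∫⁻ z, φ z ∂κ (g x) ∂η)
    (ρ : Kernel N L) [IsSFiniteKernel ρ] :
    (η ⊗ₘ ρ).map (Prod.map g id) = η ⊗ₘ (ρ ∘ₖ κ) := by
  have hg := hpres.measurable
  have hgraph : Measurable fun z => (g z, z) := hg.prodMk measurable_id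
  have hker : (Kernel.id ∥ₖ ρ).comap (fun z => (g z, z)) hgraph
      = (Kernel.id ×ₖ ρ).map (Prod.map g id) := by
    ext1 z
    rw [Kernel.comap_apply, Kernel.parallelComp_apply,
      Kernel.map_apply _ (hg.prodMap measurable_id), Kernel.prod_apply, Kernel.id_apply,
      Kernel.id_apply, ← Measure.map_prod_map _ _ hg measurable_id, Measure.map_id,
      Measure.map_dirac' hg]
  rw [← Measure.parallelComp_comp_compProd, ← map_graph_eq_compProd hpres hsupp hdis,
    ← Measure.deterministic_comp_eq_map hgraph, Measure.comp_assoc,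
    Kernel.comp_deterministic_eq_comap, hker, Measure.compProd_eq_comp_prod,
    Measure.map_comp _ _ (hg.prodMap measurable_id)]

end Disintegration

section SkewProduct

variable {N L : Type*} [MeasurableSpace N] [MeasurableSpace L] {G : N → L → L}

/-- The kernel `z ↦ (G z)_* μ_z`; it is `0` when `G` is not jointly measurable. -/
noncomputable def skewKernel (G : N → L → L) (μ : Kernel N L) : Kernel N L :=
  (Kernel.id ×ₖ μ).map (Function.uncurry G)

instance (μ : Kernel N L) [IsFiniteKernel μ] : IsFiniteKernel (skewKernel G μ) := by
  unfold skewKernel; infer_instance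

instance (μ : Kernel N L) [IsSFiniteKernel μ] : IsSFiniteKernel (skewKernel G μ) := by
  unfold skewKernel; infer_instance

lemma skewKernel_apply (hG : Measurable (Function.uncurry G)) (μ : Kernel N L)
    [IsSFiniteKernel μ] (z : N) : skewKernel G μ z = (μ z).map (G z) := by
  rw [skewKernel, Kernel.map_apply _ hG, Kernel.prod_apply, Kernel.id_apply,
    Measure.dirac_prod, Measure.map_map hG measurable_prodMk_left]
  rfl

lemma map_skewProduct_compProd (hG : Measurable (Function.uncurry G)) (η : Measure N)
    [SFinite η] (μ : Kernel N L) [IsSFiniteKernel μ] :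
    (η ⊗ₘ μ).map (fun p => (p.1, G p.1 p.2)) = η ⊗ₘ skewKernel G μ := by
  have hF : Measurable fun p : N × L => (p.1, G p.1 p.2) := measurable_fst.prodMk hG
  ext s hs
  rw [Measure.map_apply hF hs, Measure.compProd_apply (hF hs), Measure.compProd_apply hs]
  refine lintegral_congr fun x => ?_
  rw [skewKernel_apply hG, Measure.map_apply hG.of_uncurry_left (measurable_prodMk_left hs)]
  rfl

end SkewProduct

theorem stmt_6_general {N L : Type*} [MeasurableSpace N] [StandardBorelSpace N]
    [MeasurableSpace L] [StandardBorelSpace L] [Nonempty L]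
    (η : Measure N) [IsProbabilityMeasure η]
    (g : N → N) (hpres : MeasurePreserving g η η)
    (κ : N → Measure N) (hκmeas : Measurable κ)
    (hκprob : ∀ y, IsProbabilityMeasure (κ y))
    (hκsupp : ∀ y, κ y (g ⁻¹' {y}) = 1)
    (hκdis : ∀ φ : N → ℝ≥0∞, Measurable φ →
      ∫⁻ z, φ z ∂η = ∫⁻ x, ∫⁻ z, φ z ∂(κ (g x)) ∂η)
    (G : N → L → L) (hG : Measurable (Function.uncurry G))
    (m : Measure (N × L)) [IsProbabilityMeasure m] (hfst : m.fst = η) :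
    Measure.map (fun p : N × L => (g p.1, G p.1 p.2)) m = m ↔
      ∀ᵐ x ∂η, m.condKernel x =
        Measure.bind (κ x) (fun z => Measure.map (G z) (m.condKernel z)) := by
  let K : Kernel N N := ⟨κ, hκmeas⟩
  have : IsMarkovKernel K := ⟨hκprob⟩
  have hsupp (y : N) : ∀ᵐ z ∂K y, g z = y := by
    refine (ae_mem_iff_measure_eq
      (hpres.measurable (measurableSet_singleton y)).nullMeasurableSet).2 ?_
    rw [measure_univ]
    exact hκsupp y
  have hm : η ⊗ₘ m.condKernel = m := hfst ▸ m.disintegrate m.condKernel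
  have hmap : m.map (fun p => (g p.1, G p.1 p.2)) = η ⊗ₘ (skewKernel G m.condKernel ∘ₖ K) := by
    have hskew : Measurable fun p : N × L => (p.1, G p.1 p.2) := measurable_fst.prodMk hG
    rw [← map_prodMap_compProd hpres hsupp hκdis, ← map_skewProduct_compProd hG, hm,
      Measure.map_map (hpres.measurable.prodMap measurable_id) hskew]
    rfl
  conv_lhs => rw [hmap]; rhs; rw [← hm]
  rw [Kernel.compProd_eq_iff]
  refine Filter.eventually_congr (.of_forall fun x => ?_)
  rw [Kernel.comp_apply, funext (skewKernel_apply hG m.condKernel), eq_comm]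
  rfl

/-- For a measure-preserving `g` on a Lebesgue probability space, with `{κ y}` the
disintegration of `η` over the partition into preimages `g⁻¹(y)`, and a measurable skew
product `G(x,v) = (g x, G_x v)` on `N × L`, a probability `m` on `N × L` projecting to `η`
with fiber disintegration `x ↦ m.condKernel x` is `G`-invariant if and only if
`m_x = ∫ (G_z)_* m_z dκ_x(z)` for `η`-almost every `x`. -/
theorem stmt_6 {N L : Type*} [MeasurableSpace N] [StandardBorelSpace N]
    [MeasurableSpace L] [StandardBorelSpace L] [Nonempty L]
    (η : Measure N) [IsProbabilityMeasure η]
    (g : N → N) (hg : Measurable g) (hpres : MeasurePreserving g η η)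
    (κ : N → Measure N) (hκmeas : Measurable κ)
    (hκprob : ∀ y, IsProbabilityMeasure (κ y))
    (hκsupp : ∀ y, κ y (g ⁻¹' {y}) = 1)
    (hκdis : ∀ φ : N → ℝ≥0∞, Measurable φ →
      ∫⁻ z, φ z ∂η = ∫⁻ x, ∫⁻ z, φ z ∂(κ (g x)) ∂η)
    (G : N → L → L) (hG : Measurable (Function.uncurry G))
    (m : Measure (N × L)) [IsProbabilityMeasure m] (hfst : m.fst = η) :
    Measure.map (fun p : N × L => (g p.1, G p.1 p.2)) m = m ↔
      ∀ᵐ x ∂η, m.condKernel x =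
        Measure.bind (κ x) (fun z => Measure.map (G z) (m.condKernel z)) :=
  stmt_6_general η g hpres κ hκmeas hκprob hκsupp hκdis G hG m hfst
end
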